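/- (Moment approximation error, eq. 11) Let σ > 0, let p be an even positive integer, let ε > 0, let k be an even nonnegative integer, and let N be a nonnegative integer. Let C(ε) = (∫_ℝ p_G(x) exp(−ε x^p) dx)^{−1} and let μ_k = C(ε) ∫_ℝ p_G(x) x^k exp(−ε x^p) dx be the k-th raw moment of the perturbed density. Then |μ_k − C(ε) Σ_{n=0}^{N} ((−ε)^n / n!) (np+k−1)!! σ^{np+k}| ≤ C(ε) · (ε^{N+1}/(N+1)!) · ((N+1)p + k − 1)!! · σ^{(N+1)p+k}. -/

import Mathlib

open MeasureTheory Real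

/-- The centered Gaussian density with standard deviation `σ`. -/
noncomputable def pG (σ x : ℝ) : ℝ :=
  (1 / (Real.sqrt (2 * Real.pi) * σ)) * Real.exp (-x ^ 2 / (2 * σ ^ 2))

/-
Replacing `exp (-ε x ^ p)` by its Taylor polynomial of degree `N` turns the truncated sum into a
combination of Gaussian moments `∫ p_G(x) x ^ m dx = (m - 1)‼ σ ^ m` (even `m`), which come from
the Gamma integral `Γ(j + 1/2) = (2j - 1)‼ √π / 2 ^ j`. Since `-ε x ^ p ≤ 0` and `exp ≤ 1` on
`(-∞, 0]`, the Lagrange remainder is at most `(ε x ^ p) ^ (N + 1) / (N + 1)!`, so the error is at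
most `C ε ^ (N + 1) / (N + 1)!` times the Gaussian moment of order `(N + 1) p + k`.
-/

open Set Finset
open scoped Nat

theorem integral_pow_two_mul_mul_exp_neg_mul_sq {b : ℝ} (hb : 0 < b) (j : ℕ) :
    ∫ x : ℝ, x ^ (2 * j) * exp (-b * x ^ 2) = (2 * j - 1)‼ * √(π / b) / (2 * b) ^ j := by
  have hIoi := integral_rpow_mul_exp_neg_mul_rpow two_pos (q := (2 * j : ℕ))
    (neg_one_lt_zero.trans_le (Nat.cast_nonneg _)) hb
  have hΓ : ((2 * j : ℕ) + 1 : ℝ) / 2 = j + 1 / 2 := by push_cast; ring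
  have hrpow : b ^ (-((2 * j : ℕ) + 1 : ℝ) / 2) = (b ^ j)⁻¹ * (√b)⁻¹ := by
    rw [show (-((2 * j : ℕ) + 1 : ℝ) / 2) = -(j : ℝ) + -(1 / 2) by push_cast; ring,
      rpow_add hb, rpow_neg hb.le, rpow_neg hb.le, rpow_natCast, sqrt_eq_rpow]
  calc ∫ x : ℝ, x ^ (2 * j) * exp (-b * x ^ 2)
      = ∫ x : ℝ, |x| ^ ((2 * j : ℕ) : ℝ) * exp (-b * |x| ^ (2 : ℝ)) := by
        congr 1 with x
        rw [rpow_natCast, rpow_two, sq_abs, pow_abs, abs_of_nonneg ((even_two_mul j).pow_nonneg x)]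
    _ = 2 * ((b ^ j)⁻¹ * (√b)⁻¹ * (1 / 2) * ((2 * j - 1)‼ * √π / 2 ^ j)) := by
        rw [integral_comp_abs (f := fun y => y ^ ((2 * j : ℕ) : ℝ) * exp (-b * y ^ (2 : ℝ))),
          hIoi, hΓ, hrpow, Gamma_nat_add_half]
    _ = (2 * j - 1)‼ * √(π / b) / (2 * b) ^ j := by
        rw [sqrt_div' _ hb.le, mul_pow]
        field_simp

theorem Real.abs_exp_sub_sum_le_of_nonpos {x : ℝ} (hx : x ≤ 0) (N : ℕ) :
    |exp x - ∑ n ∈ range (N + 1), x ^ n / n !| ≤ |x| ^ (N + 1) / (N + 1)! := by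
  rcases hx.eq_or_lt with rfl | hx
  · simp [sum_range_succ']
  obtain ⟨ξ, hξ, hrem⟩ :=
    taylor_mean_remainder_lagrange_iteratedDeriv hx.ne' contDiff_exp.contDiffOn (n := N)
  have hpoly : taylorWithinEval exp N (uIcc 0 x) 0 x = ∑ n ∈ range (N + 1), x ^ n / n ! := by
    rw [taylor_within_apply]
    refine sum_congr rfl fun n _ => ?_
    rw [iteratedDerivWithin_eq_iteratedDeriv (uniqueDiffOn_uIcc hx.ne') contDiff_exp.contDiffAt
      left_mem_uIcc, iteratedDeriv_eq_iterate, iter_deriv_exp]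
    simp [div_eq_inv_mul]
  have hξ_nonpos : ξ ≤ 0 := by
    rw [uIoo_of_ge hx.le] at hξ
    exact hξ.2.le
  rw [← hpoly, hrem, iteratedDeriv_eq_iterate, iter_deriv_exp, sub_zero, abs_div, abs_mul,
    abs_pow, abs_of_pos (exp_pos ξ), Nat.abs_cast]
  gcongr
  exact mul_le_of_le_one_left (by positivity) (exp_le_one_iff.2 hξ_nonpos)

theorem pG_eq (σ x : ℝ) : pG σ x = (√(2 * π) * σ)⁻¹ * exp (-(2 * σ ^ 2)⁻¹ * x ^ 2) := by
  rw [pG, one_div]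
  congr 2
  ring

theorem pG_nonneg {σ : ℝ} (hσ : 0 ≤ σ) (x : ℝ) : 0 ≤ pG σ x := by
  unfold pG
  positivity

theorem integrable_pow_mul_exp_neg_mul_sq {b : ℝ} (hb : 0 < b) (m : ℕ) :
    Integrable fun x : ℝ => x ^ m * exp (-b * x ^ 2) := by
  simpa only [rpow_natCast] using
    integrable_rpow_mul_exp_neg_mul_sq hb (neg_one_lt_zero.trans_le m.cast_nonneg)

theorem integrable_pG_mul_pow {σ : ℝ} (hσ : σ ≠ 0) (m : ℕ) :
    Integrable fun x => pG σ x * x ^ m := by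
  simp_rw [pG_eq, mul_assoc, mul_comm (exp _)]
  exact (integrable_pow_mul_exp_neg_mul_sq (by positivity) m).const_mul _

theorem integral_pG_mul_pow_of_even {σ : ℝ} (hσ : 0 < σ) {m : ℕ} (hm : Even m) :
    ∫ x, pG σ x * x ^ m = (m - 1)‼ * σ ^ m := by
  obtain ⟨j, rfl⟩ := hm
  simp_rw [← two_mul, pG_eq, mul_assoc, integral_const_mul, mul_comm (exp _),
    integral_pow_two_mul_mul_exp_neg_mul_sq (inv_pos.2 (by positivity : 0 < 2 * σ ^ 2))]
  rw [div_inv_eq_mul, show π * (2 * σ ^ 2) = 2 * π * σ ^ 2 by ring, sqrt_mul' _ (sq_nonneg σ),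
    sqrt_sq hσ.le, show 2 * (2 * σ ^ 2)⁻¹ = (σ ^ 2)⁻¹ by field_simp, inv_pow, pow_mul]
  field_simp

theorem integrable_pG_mul_pow_mul_exp_neg_mul_pow {σ ε : ℝ} (hσ : σ ≠ 0) (hε : 0 ≤ ε) {p : ℕ}
    (hp : Even p) (m : ℕ) : Integrable fun x => pG σ x * x ^ m * exp (-ε * x ^ p) := by
  refine (integrable_pG_mul_pow hσ m).mul_bdd (c := 1) (by fun_prop) (ae_of_all _ fun x => ?_)
  rw [norm_of_nonneg (exp_pos _).le, exp_le_one_iff, neg_mul, neg_nonpos]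
  exact mul_nonneg hε (hp.pow_nonneg x)

section TruncatedExpansion

variable {σ : ℝ} {p k : ℕ}

theorem pG_mul_pow_mul_sum_monomial_pow (c x : ℝ) (N : ℕ) :
    pG σ x * x ^ k * ∑ n ∈ range (N + 1), (c * x ^ p) ^ n / (n ! : ℝ) =
      ∑ n ∈ range (N + 1), c ^ n / (n ! : ℝ) * (pG σ x * x ^ (n * p + k)) := by
  rw [mul_sum]
  exact sum_congr rfl fun n _ => by ring

theorem integrable_pG_mul_pow_mul_sum_monomial_pow (hσ : σ ≠ 0) (c : ℝ) (N : ℕ) :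
    Integrable fun x => pG σ x * x ^ k * ∑ n ∈ range (N + 1), (c * x ^ p) ^ n / (n ! : ℝ) := by
  simp_rw [pG_mul_pow_mul_sum_monomial_pow]
  exact integrable_finsetSum _ fun n _ => (integrable_pG_mul_pow hσ _).const_mul _

theorem integral_pG_mul_pow_mul_sum_monomial_pow (hσ : 0 < σ) (hp : Even p) (hk : Even k)
    (c : ℝ) (N : ℕ) :
    ∫ x, pG σ x * x ^ k * ∑ n ∈ range (N + 1), (c * x ^ p) ^ n / (n ! : ℝ) =
      ∑ n ∈ range (N + 1), c ^ n / (n ! : ℝ) * (n * p + k - 1)‼ * σ ^ (n * p + k) := by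
  simp_rw [pG_mul_pow_mul_sum_monomial_pow]
  rw [integral_finsetSum _ fun n _ => (integrable_pG_mul_pow hσ.ne' _).const_mul _]
  refine sum_congr rfl fun n _ => ?_
  rw [integral_const_mul, integral_pG_mul_pow_of_even hσ ((hp.mul_left n).add hk), mul_assoc]

theorem abs_integral_pG_mul_pow_mul_exp_sub_sum_le (hσ : 0 < σ) (hp : Even p) (hk : Even k)
    {ε : ℝ} (hε : 0 ≤ ε) (N : ℕ) :
    |∫ x, pG σ x * x ^ k *
        (exp (-ε * x ^ p) - ∑ n ∈ range (N + 1), (-ε * x ^ p) ^ n / (n ! : ℝ))| ≤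
      ε ^ (N + 1) / ((N + 1)! : ℝ) * ((N + 1) * p + k - 1)‼ * σ ^ ((N + 1) * p + k) := by
  have hpointwise (x : ℝ) :
      ‖pG σ x * x ^ k * (exp (-ε * x ^ p) - ∑ n ∈ range (N + 1), (-ε * x ^ p) ^ n / (n ! : ℝ))‖
        ≤ ε ^ (N + 1) / ((N + 1)! : ℝ) * (pG σ x * x ^ ((N + 1) * p + k)) := by
    have hexponent : -ε * x ^ p ≤ 0 := by
      rw [neg_mul, neg_nonpos]
      exact mul_nonneg hε (hp.pow_nonneg x)
    have htaylor := abs_exp_sub_sum_le_of_nonpos hexponent N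
    rw [abs_of_nonpos hexponent, show -(-ε * x ^ p) = ε * x ^ p by ring] at htaylor
    have hweight : 0 ≤ pG σ x * x ^ k := mul_nonneg (pG_nonneg hσ.le x) (hk.pow_nonneg x)
    rw [norm_mul, norm_of_nonneg hweight, Real.norm_eq_abs]
    calc pG σ x * x ^ k * |_| ≤ pG σ x * x ^ k * ((ε * x ^ p) ^ (N + 1) / ((N + 1)! : ℝ)) := by
          gcongr
      _ = _ := by ring
  rw [← Real.norm_eq_abs]
  refine (norm_integral_le_of_norm_le ((integrable_pG_mul_pow hσ.ne' _).const_mul _)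
    (ae_of_all _ hpointwise)).trans_eq ?_
  rw [integral_const_mul, integral_pG_mul_pow_of_even hσ ((hp.mul_left _).add hk), mul_assoc]

end TruncatedExpansion

theorem stmt3_general (σ : ℝ) (hσ : 0 < σ) (p : ℕ) (hpe : Even p)
    (ε : ℝ) (hε : 0 < ε) (k : ℕ) (hk : Even k) (N : ℕ)
    (C : ℝ) (hC : C = (∫ x : ℝ, pG σ x * Real.exp (-ε * x ^ p))⁻¹)
    (μ : ℝ) (hμ : μ = C * ∫ x : ℝ, pG σ x * x ^ k * Real.exp (-ε * x ^ p)) :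
    |μ - C * ∑ n ∈ Finset.range (N + 1),
        (-ε) ^ n / (n.factorial : ℝ) *
          (Nat.doubleFactorial (n * p + k - 1) : ℝ) * σ ^ (n * p + k)| ≤
      C * (ε ^ (N + 1) / ((N + 1).factorial : ℝ)) *
        (Nat.doubleFactorial ((N + 1) * p + k - 1) : ℝ) * σ ^ ((N + 1) * p + k) := by
  have hC_nonneg : 0 ≤ C := by
    rw [hC]
    exact inv_nonneg.2 (integral_nonneg fun x => mul_nonneg (pG_nonneg hσ.le x) (exp_pos _).le)
  rw [hμ, ← integral_pG_mul_pow_mul_sum_monomial_pow hσ hpe hk, ← mul_sub,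
    ← integral_sub (integrable_pG_mul_pow_mul_exp_neg_mul_pow hσ.ne' hε.le hpe k)
      (integrable_pG_mul_pow_mul_sum_monomial_pow hσ.ne' _ N)]
  simp_rw [← mul_sub]
  rw [abs_mul, abs_of_nonneg hC_nonneg, mul_assoc C, mul_assoc C]
  gcongr
  exact abs_integral_pG_mul_pow_mul_exp_sub_sum_le hσ hpe hk hε.le N

theorem stmt3 (σ : ℝ) (hσ : 0 < σ) (p : ℕ) (hp : 0 < p) (hpe : Even p)
    (ε : ℝ) (hε : 0 < ε) (k : ℕ) (hk : Even k) (N : ℕ)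
    (C : ℝ) (hC : C = (∫ x : ℝ, pG σ x * Real.exp (-ε * x ^ p))⁻¹)
    (μ : ℝ) (hμ : μ = C * ∫ x : ℝ, pG σ x * x ^ k * Real.exp (-ε * x ^ p)) :
    |μ - C * ∑ n ∈ Finset.range (N + 1),
        (-ε) ^ n / (n.factorial : ℝ) *
          (Nat.doubleFactorial (n * p + k - 1) : ℝ) * σ ^ (n * p + k)| ≤
      C * (ε ^ (N + 1) / ((N + 1).factorial : ℝ)) *
        (Nat.doubleFactorial ((N + 1) * p + k - 1) : ℝ) * σ ^ ((N + 1) * p + k) :=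
  stmt3_general σ hσ p hpe ε hε k hk N C hC μ hμ
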